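/- For q > 0 define the 2×2 complex matrices Ψ(q) = (1/√2)·[[q^{−1/4}, −i·q^{−1/4}], [q^{1/4}, i·q^{1/4}]], U'(q) = diag(√q, −√q), R₀(q) = Id, and for n ≥ 1, Rₙ(q) = q^{−n/2}·((2n−1)!!·(2n−3)!!/(n!·2^{4n}))·[[−1, 2n·i·(−1)^{n+1}], [2n·i, (−1)^{n+1}]]. Then for every n ≥ 0 and every q > 0: q·(dRₙ/dq)(q) + Ψ(q)^{−1}·(q·(dΨ/dq)(q))·Rₙ(q) = U'(q)·R_{n+1}(q) − R_{n+1}(q)·U'(q), where derivatives are taken entrywise in q. -/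

import Mathlib

/-!
`Ψ(q) = diag(q^{-1/4}, q^{1/4}) · Ψ(1)`, so `q dΨ/dq = diag(-1/4, 1/4) · Ψ` and the connection
matrix `Ψ⁻¹ · q dΨ/dq = Ψ(1)⁻¹ diag(-1/4, 1/4) Ψ(1) = [[0, i/4], [-i/4, 0]]` does not depend on `q`.
Likewise `Rₙ(q) = q^{-n/2} Rₙ(1)`, so `q dRₙ/dq = -(n/2) Rₙ`, and `U' = √q · diag(1, -1)`.
Both sides of the recursion are then multiples of one off-diagonal matrix; for `n ≥ 1` comparing
the scalars leaves `(n² - 1/4) cₙ = 4 (n + 1) c_{n+1}` for the numerical coefficients `cₙ` of `Rₙ`,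
which is `(2n + 1)!! = (2n + 1) (2n - 1)!!`.
-/

open Matrix

/-- The odd double factorial `(2k−1)!! = (2k)!/(2ᵏ·k!)`, with `(−1)!! = 1`, as a complex
number. -/
noncomputable def oddDoubleFactorial (k : ℕ) : ℂ :=
  (Nat.factorial (2 * k) : ℂ) / (2 ^ k * (Nat.factorial k : ℂ))

/-- The transition matrix `Ψ(q)` between the flat and normalized canonical bases of the
non-equivariant quantum cohomology of ℙ¹. -/
noncomputable def PsiMat (q : ℝ) : Matrix (Fin 2) (Fin 2) ℂ :=
  ((Real.sqrt 2 : ℝ)⁻¹ : ℂ) •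
    Matrix.of
      ![![((q ^ (-(1 / 4 : ℝ)) : ℝ) : ℂ), -Complex.I * ((q ^ (-(1 / 4 : ℝ)) : ℝ) : ℂ)],
        ![((q ^ ((1 / 4 : ℝ)) : ℝ) : ℂ), Complex.I * ((q ^ ((1 / 4 : ℝ)) : ℝ) : ℂ)]]

/-- The matrix `U'(q) = q·dU/dq = diag(√q, −√q)` of derivatives of the canonical
coordinates of the quantum cohomology of ℙ¹. -/
noncomputable def UprimeMat (q : ℝ) : Matrix (Fin 2) (Fin 2) ℂ :=
  Matrix.of ![![((Real.sqrt q : ℝ) : ℂ), 0], ![0, -((Real.sqrt q : ℝ) : ℂ)]]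

/-- The coefficients `Rₙ(q)` of Givental's R-matrix for the non-equivariant
Gromov-Witten theory of ℙ¹: `R₀ = Id` and for `n ≥ 1`,
`Rₙ(q) = q^{−n/2}·((2n−1)!!(2n−3)!!/(n!·2^{4n}))·[[−1, 2n·i·(−1)^{n+1}],[2n·i, (−1)^{n+1}]]`. -/
noncomputable def RMat (n : ℕ) (q : ℝ) : Matrix (Fin 2) (Fin 2) ℂ :=
  if n = 0 then 1
  else
    (((q ^ (-(n : ℝ) / 2) : ℝ) : ℂ) *
        (oddDoubleFactorial n * oddDoubleFactorial (n - 1) /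
          ((Nat.factorial n : ℂ) * 2 ^ (4 * n)))) •
      Matrix.of
        ![![-1, 2 * (n : ℂ) * Complex.I * (-1 : ℂ) ^ (n + 1)],
          ![2 * (n : ℂ) * Complex.I, (-1 : ℂ) ^ (n + 1)]]

/-- Entrywise derivative in `q` of a matrix-valued function of a real variable. -/
noncomputable def matDeriv (M : ℝ → Matrix (Fin 2) (Fin 2) ℂ) (q : ℝ) :
    Matrix (Fin 2) (Fin 2) ℂ :=
  Matrix.of fun i j => deriv (fun t : ℝ => M t i j) q

open Complex

theorem ofReal_mul_deriv_rpow_mul {q : ℝ} (hq : 0 < q) (a : ℝ) (c : ℂ) :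
    (q : ℂ) * deriv (fun t : ℝ => ((t ^ a : ℝ) : ℂ) * c) q = a * (((q ^ a : ℝ) : ℂ) * c) := by
  have hderiv := ((Real.hasDerivAt_rpow_const (p := a) (Or.inl hq.ne')).ofReal_comp).mul_const c
  rw [hderiv.deriv, Real.rpow_sub_one hq.ne']
  have hq' : (q : ℂ) ≠ 0 := ofReal_ne_zero.mpr hq.ne'
  push_cast
  field_simp

theorem smul_matDeriv_diagonal_rpow_mul {q : ℝ} (hq : 0 < q) (a : Fin 2 → ℝ)
    (K : Matrix (Fin 2) (Fin 2) ℂ) :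
    (q : ℂ) • matDeriv (fun t => diagonal (fun i => ((t ^ a i : ℝ) : ℂ)) * K) q =
      diagonal (fun i => (a i : ℂ)) * (diagonal (fun i => ((q ^ a i : ℝ) : ℂ)) * K) := by
  ext i j
  simp only [matDeriv, Matrix.smul_apply, of_apply, diagonal_mul, smul_eq_mul]
  exact ofReal_mul_deriv_rpow_mul hq _ _

theorem smul_matDeriv_rpow_smul {q : ℝ} (hq : 0 < q) (a : ℝ) (K : Matrix (Fin 2) (Fin 2) ℂ) :
    (q : ℂ) • matDeriv (fun t => ((t ^ a : ℝ) : ℂ) • K) q = (a : ℂ) • (((q ^ a : ℝ) : ℂ) • K) := by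
  ext i j
  simp only [matDeriv, Matrix.smul_apply, of_apply, smul_eq_mul]
  exact ofReal_mul_deriv_rpow_mul hq _ _

theorem inv_mul_mul_mul_eq_of_commute {n R : Type*} [Fintype n] [DecidableEq n] [CommRing R]
    {S C D : Matrix n n R} (hS : IsUnit S.det) (hD : Commute D S) :
    (S * C)⁻¹ * (D * (S * C)) = C⁻¹ * D * C := by
  rw [Matrix.mul_inv_rev, ← mul_assoc D, hD.eq]
  simp only [mul_assoc]
  rw [nonsing_inv_mul_cancel_left _ _ hS]

theorem PsiMat_eq_diagonal_mul (t : ℝ) :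
    PsiMat t = diagonal (fun i => ((t ^ ![-(1 / 4 : ℝ), 1 / 4] i : ℝ) : ℂ)) * PsiMat 1 := by
  ext i j
  fin_cases i <;> fin_cases j <;> simp [PsiMat, diagonal_mul] <;> ring

theorem PsiMat_one_inv : (PsiMat 1)⁻¹ = ((√2 : ℝ)⁻¹ : ℂ) • !![1, 1; I, -I] := by
  refine inv_eq_right_inv ?_
  have hsqrt : ((√2 : ℝ) : ℂ) ^ 2 = 2 := by norm_cast; simp
  ext i j
  fin_cases i <;> fin_cases j <;> simp [PsiMat, Matrix.mul_apply, Fin.sum_univ_two] <;>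
    grind [I_sq]

noncomputable def psiConnection : Matrix (Fin 2) (Fin 2) ℂ := !![0, I / 4; -I / 4, 0]

theorem PsiMat_inv_mul_smul_matDeriv {q : ℝ} (hq : 0 < q) :
    (PsiMat q)⁻¹ * ((q : ℂ) • matDeriv PsiMat q) = psiConnection := by
  set S : Fin 2 → ℂ := fun i => ((q ^ ![-(1 / 4 : ℝ), 1 / 4] i : ℝ) : ℂ)
  set D : Matrix (Fin 2) (Fin 2) ℂ := diagonal (fun i => ((![-(1 / 4 : ℝ), 1 / 4] i : ℝ) : ℂ))
  have hS : IsUnit (diagonal S).det := by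
    simp [S, det_diagonal, Fin.prod_univ_two, Real.rpow_pos_of_pos hq, ne_of_gt]
  have hD : Commute D (diagonal S) := by
    simp only [D, Commute, SemiconjBy, diagonal_mul_diagonal, mul_comm]
  rw [funext PsiMat_eq_diagonal_mul, smul_matDeriv_diagonal_rpow_mul hq,
    inv_mul_mul_mul_eq_of_commute hS hD, PsiMat_one_inv]
  have hsqrt : ((√2 : ℝ) : ℂ) ^ 2 = 2 := by norm_cast; simp
  ext i j
  fin_cases i <;> fin_cases j <;>
    simp [D, psiConnection, PsiMat, Matrix.mul_apply, Fin.sum_univ_two,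
      vecMul_diagonal] <;>
    grind [I_sq]

noncomputable def rCoeff (n : ℕ) : ℂ :=
  oddDoubleFactorial n * oddDoubleFactorial (n - 1) / ((Nat.factorial n : ℂ) * 2 ^ (4 * n))

def rShape (n : ℕ) : Matrix (Fin 2) (Fin 2) ℂ :=
  !![-1, 2 * (n : ℂ) * I * (-1) ^ (n + 1); 2 * (n : ℂ) * I, (-1) ^ (n + 1)]

/-- Both sides of the recursion for `RMat n` are scalar multiples of `rBracketShape n`. -/
def rBracketShape (n : ℕ) : Matrix (Fin 2) (Fin 2) ℂ := !![0, -I * (-1) ^ (n + 1); -I, 0]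

def pauliZ : Matrix (Fin 2) (Fin 2) ℂ := !![1, 0; 0, -1]

theorem oddDoubleFactorial_succ (k : ℕ) :
    oddDoubleFactorial (k + 1) = (2 * k + 1) * oddDoubleFactorial k := by
  simp only [oddDoubleFactorial, show 2 * (k + 1) = 2 * k + 1 + 1 by ring, Nat.factorial_succ,
    pow_succ]
  push_cast
  field_simp
  ring

theorem rCoeff_one : rCoeff 1 = 1 / 16 := by
  norm_num [rCoeff, oddDoubleFactorial]

theorem rCoeff_succ {n : ℕ} (hn : n ≠ 0) :
    ((n : ℂ) ^ 2 - 1 / 4) * rCoeff n = 4 * (n + 1) * rCoeff (n + 1) := by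
  obtain ⟨m, rfl⟩ := Nat.exists_eq_succ_of_ne_zero hn
  have hfact : (m.factorial : ℂ) ≠ 0 := by exact_mod_cast m.factorial_ne_zero
  have hm : (m : ℂ) + 1 + 1 ≠ 0 := by exact_mod_cast (m + 1).succ_ne_zero
  simp only [rCoeff, Nat.succ_sub_one, oddDoubleFactorial_succ, Nat.factorial_succ]
  push_cast
  field_simp
  ring

theorem RMat_of_ne_zero {n : ℕ} (hn : n ≠ 0) (q : ℝ) :
    RMat n q = (((q ^ (-(n : ℝ) / 2) : ℝ) : ℂ) * rCoeff n) • rShape n := by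
  rw [RMat, if_neg hn]
  rfl

theorem RMat_eq_rpow_smul (n : ℕ) (q : ℝ) :
    RMat n q = ((q ^ (-(n : ℝ) / 2) : ℝ) : ℂ) • RMat n 1 := by
  rcases eq_or_ne n 0 with rfl | hn
  · simp [RMat]
  · rw [RMat_of_ne_zero hn, RMat_of_ne_zero hn, Real.one_rpow, ofReal_one, one_mul, mul_smul]

theorem smul_matDeriv_RMat {q : ℝ} (hq : 0 < q) (n : ℕ) :
    (q : ℂ) • matDeriv (RMat n) q = (-(n : ℂ) / 2) • RMat n q := by
  rw [funext (RMat_eq_rpow_smul n), smul_matDeriv_rpow_smul hq]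
  push_cast
  rfl

theorem UprimeMat_eq_smul_pauliZ (q : ℝ) : UprimeMat q = ((√q : ℝ) : ℂ) • pauliZ := by
  ext i j
  fin_cases i <;> fin_cases j <;> simp [UprimeMat, pauliZ]

theorem psiConnection_eq : psiConnection = (1 / 4 : ℂ) • rBracketShape 0 := by
  ext i j
  fin_cases i <;> fin_cases j <;> simp [psiConnection, rBracketShape] <;> ring

theorem smul_rShape_add_psiConnection_mul (n : ℕ) :
    (-(n : ℂ) / 2) • rShape n + psiConnection * rShape n =
      ((n : ℂ) ^ 2 - 1 / 4) • rBracketShape n := by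
  ext i j
  fin_cases i <;> fin_cases j <;>
    simp [psiConnection, rShape, rBracketShape] <;> ring_nf <;> simp [I_sq]

theorem pauliZ_mul_rShape_sub (n : ℕ) :
    pauliZ * rShape (n + 1) - rShape (n + 1) * pauliZ =
      (4 * ((n : ℂ) + 1)) • rBracketShape n := by
  ext i j
  fin_cases i <;> fin_cases j <;>
    simp [pauliZ, rShape, rBracketShape] <;> ring

theorem smul_RMat_add_psiConnection_mul {n : ℕ} (hn : n ≠ 0) (q : ℝ) :
    (-(n : ℂ) / 2) • RMat n q + psiConnection * RMat n q =
      (((q ^ (-(n : ℝ) / 2) : ℝ) : ℂ) * (((n : ℂ) ^ 2 - 1 / 4) * rCoeff n)) • rBracketShape n := by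
  rw [RMat_of_ne_zero hn, Matrix.mul_smul, smul_comm, ← smul_add,
    smul_rShape_add_psiConnection_mul, smul_smul, mul_assoc, mul_comm (rCoeff n)]

theorem UprimeMat_mul_RMat_succ_sub {q : ℝ} (hq : 0 < q) (n : ℕ) :
    UprimeMat q * RMat (n + 1) q - RMat (n + 1) q * UprimeMat q =
      (((q ^ (-(n : ℝ) / 2) : ℝ) : ℂ) * (4 * (n + 1) * rCoeff (n + 1))) • rBracketShape n := by
  have hscale : ((√q : ℝ) : ℂ) * ((q ^ (-((n + 1 : ℕ) : ℝ) / 2) : ℝ) : ℂ) =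
      ((q ^ (-(n : ℝ) / 2) : ℝ) : ℂ) := by
    rw [← ofReal_mul, Real.sqrt_eq_rpow, ← Real.rpow_add hq]
    push_cast
    ring_nf
  rw [UprimeMat_eq_smul_pauliZ, RMat_of_ne_zero n.add_one_ne_zero, Matrix.smul_mul,
    Matrix.mul_smul, Matrix.smul_mul, Matrix.mul_smul, smul_smul, smul_comm, smul_smul, ← smul_sub,
    pauliZ_mul_rShape_sub, smul_smul, ← hscale]
  congr 1
  ring

/-- The defining recursion `(d + Ψ⁻¹dΨ)Rₙ = [dU, R_{n+1}]` (in the `t¹`-direction, with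
`q·d/dq = d/dt¹`) for Givental's R-matrix of the non-equivariant Gromov-Witten theory
of ℙ¹. -/
theorem givental_R_matrix_recursion :
    ∀ n : ℕ, ∀ q : ℝ, 0 < q →
      (q : ℂ) • matDeriv (RMat n) q +
          (PsiMat q)⁻¹ * ((q : ℂ) • matDeriv PsiMat q) * RMat n q =
        UprimeMat q * RMat (n + 1) q - RMat (n + 1) q * UprimeMat q := by
  intro n q hq
  rw [smul_matDeriv_RMat hq, PsiMat_inv_mul_smul_matDeriv hq, UprimeMat_mul_RMat_succ_sub hq]
  rcases eq_or_ne n 0 with rfl | hn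
  · norm_num [RMat, rCoeff_one, psiConnection_eq]
  · rw [smul_RMat_add_psiConnection_mul hn, rCoeff_succ hn]
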